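/- Let F ≤ S_d be transitive, let l be a legal labelling of the d-regular tree T_d (d ≥ 3), and let b be a vertex of T_d. Set Δ := {1,…,d}, D := {1,…,d−1}, Δ_n := Δ × D^{n−1}, and let F_d be the stabilizer of d in F (acting on D after identifying {1,…,d}∖{d} with D). Define permutation groups F(n) ≤ Sym(Δ_n) inductively by F(1) := F and F(n+1) := F(n) ⋉ F_d^{Δ_n}, the permutational wreath product acting on Δ_{n+1} = Δ_n × D in which F(n) permutes the Δ_n-coordinate and the copy of F_d indexed by ω ∈ Δ_n acts on the D-coordinate over ω. Then the stabilizer of b in U^{(l)}(F), with the topology of pointwise convergence, is isomorphic as a topological group to the inverse limit lim← F(n) of the system given by the canonical projections π_n : F(n) → F(n−1). -/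

import Mathlib

/-!
STATEMENT 14.  Let F ≤ S_d be transitive, l a legal labelling of the d-regular tree T_d
(d ≥ 3), b a vertex.  With Δ_n = Δ × D^{n-1}, F(1) = F and F(n+1) = F(n) ⋉ F_d^{Δ_n} the
iterated wreath products, the stabilizer of b in U^{(l)}(F), with the topology of
pointwise convergence, is isomorphic as a topological group to the inverse limit
lim← F(n).  This is expressed by an injective continuous monoid homomorphism φ into the
product ∏ₙ Sym(Δ_n) which is an embedding with image the inverse limit.
-/

def IsTreeAut {V : Type*} (T : SimpleGraph V) (g : Equiv.Perm V) : Prop :=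
  ∀ u v : V, T.Adj (g u) (g v) ↔ T.Adj u v

structure LegalLabelling {V : Type*} (T : SimpleGraph V) (d : ℕ) where
  label : V → V → Fin d
  symm : ∀ u v : V, T.Adj u v → label u v = label v u
  inj : ∀ ⦃x u w : V⦄, T.Adj x u → T.Adj x w → label x u = label x w → u = w
  surj : ∀ (x : V) (i : Fin d), ∃ w : V, T.Adj x w ∧ label x w = i

/-- Membership in the Burger–Mozes universal group U^{(l)}(F). -/
def InU {V : Type*} {d : ℕ} (T : SimpleGraph V) (l : LegalLabelling T d)
    (F : Subgroup (Equiv.Perm (Fin d))) (g : Equiv.Perm V) : Prop :=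
  IsTreeAut T g ∧
    ∀ x : V, ∃ a ∈ F, ∀ w : V, T.Adj x w → l.label (g x) (g w) = a (l.label x w)

/-- The universal group U^{(l)}(F) as a subgroup of the permutations of the vertices. -/
def Usub {V : Type*} {d : ℕ} (T : SimpleGraph V) (l : LegalLabelling T d)
    (F : Subgroup (Equiv.Perm (Fin d))) : Subgroup (Equiv.Perm V) where
  carrier := {g | InU T l F g}
  one_mem' := ⟨fun _ _ => Iff.rfl, fun _ => ⟨1, one_mem F, fun _ _ => rfl⟩⟩
  mul_mem' := by
    rintro g h ⟨hg1, hg2⟩ ⟨hh1, hh2⟩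
    refine ⟨fun u v => (hg1 (h u) (h v)).trans (hh1 u v), fun x => ?_⟩
    obtain ⟨a, ha, hag⟩ := hg2 (h x)
    obtain ⟨c, hc, hch⟩ := hh2 x
    refine ⟨a * c, mul_mem ha hc, fun w hw => ?_⟩
    have hw' : T.Adj (h x) (h w) := (hh1 x w).mpr hw
    calc l.label (g (h x)) (g (h w)) = a (l.label (h x) (h w)) := hag (h w) hw'
      _ = a (c (l.label x w)) := by rw [hch w hw]
      _ = (a * c) (l.label x w) := rfl
  inv_mem' := by
    rintro g ⟨hg1, hg2⟩
    constructor
    · intro u v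
      have h2 := hg1 (g⁻¹ u) (g⁻¹ v)
      simp only [← Equiv.Perm.mul_apply, mul_inv_cancel, Equiv.Perm.one_apply] at h2
      exact h2.symm
    · intro x
      obtain ⟨a, ha, hag⟩ := hg2 (g⁻¹ x)
      refine ⟨a⁻¹, inv_mem ha, fun w hw => ?_⟩
      have hw' : T.Adj (g⁻¹ x) (g⁻¹ w) := by
        have h2 := hg1 (g⁻¹ x) (g⁻¹ w)
        simp only [← Equiv.Perm.mul_apply, mul_inv_cancel, Equiv.Perm.one_apply] at h2
        exact h2.mp hw
      have key := hag (g⁻¹ w) hw'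
      simp only [← Equiv.Perm.mul_apply, mul_inv_cancel, Equiv.Perm.one_apply] at key
      rw [key, ← Equiv.Perm.mul_apply, inv_mul_cancel, Equiv.Perm.one_apply]

/-- The stabilizer of the vertex b in U^{(l)}(F). -/
def Ustab {V : Type*} {d : ℕ} (T : SimpleGraph V) (l : LegalLabelling T d)
    (F : Subgroup (Equiv.Perm (Fin d))) (b : V) : Subgroup (Equiv.Perm V) :=
  Usub T l F ⊓ MulAction.stabilizer (Equiv.Perm V) b

/-- The topology of pointwise convergence on vertices (vertices being discrete). -/
def permTop (V : Type*) : TopologicalSpace (Equiv.Perm V) :=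
  TopologicalSpace.induced (fun g : Equiv.Perm V => (g : V → V))
    (@Pi.topologicalSpace V (fun _ => V) (fun _ => ⊥))

/-- Δ_n: Δ_1 = Fin d and Δ_{n+1} = Δ_n × D with D = Fin (d-1) (indexed from 0 here). -/
def Delta (d : ℕ) : ℕ → Type
  | 0 => Fin d
  | n+1 => Delta d n × Fin (d-1)

def deltaFst (d n : ℕ) : Delta d (n+1) → Delta d n := fun p => p.1
def deltaSnd (d n : ℕ) : Delta d (n+1) → Fin (d-1) := fun p => p.2
def deltaMk (d n : ℕ) (x : Delta d n) (j : Fin (d-1)) : Delta d (n+1) := (x, j)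

/-- The stabilizer F_d of the last point of {1,…,d} in F, viewed as a set of permutations
of D = Fin (d-1) via the identification of {1,…,d-1} with D. -/
def FdStab (d : ℕ) (F : Subgroup (Equiv.Perm (Fin d))) : Set (Equiv.Perm (Fin (d-1))) :=
  {τ | ∃ a ∈ F, ∀ j : Fin (d-1),
    a (Fin.castLE (Nat.sub_le d 1) j) = Fin.castLE (Nat.sub_le d 1) (τ j)}

/-- F(n): the iterated permutational wreath products, F(1) = F and
F(n+1) = F(n) ⋉ F_d^{Δ_n} acting on Δ_{n+1} = Δ_n × D, where F(n) permutes the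
Δ_n-coordinate and the copy of F_d indexed by ω ∈ Δ_n acts on the D-coordinate over ω. -/
def FnSet (d : ℕ) (F : Subgroup (Equiv.Perm (Fin d))) :
    (n : ℕ) → Set (Equiv.Perm (Delta d n))
  | 0 => (F : Set (Equiv.Perm (Fin d)))
  | n+1 => {π | ∃ σ ∈ FnSet d F n, ∃ τ : Delta d n → Equiv.Perm (Fin (d-1)),
      (∀ ω, τ ω ∈ FdStab d F) ∧
      ∀ p : Delta d (n+1),
        π p = deltaMk d n (σ (deltaFst d n p)) (τ (deltaFst d n p) (deltaSnd d n p))}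

/-- The inverse limit lim← F(n) along the canonical projections π_n : F(n+1) → F(n), as a
subset of the product group ∏ₙ Sym(Δ_n): the compatible sequences (f_n) with
f_n ∈ F(n). -/
def limSet (d : ℕ) (F : Subgroup (Equiv.Perm (Fin d))) :
    Set ((n : ℕ) → Equiv.Perm (Delta d n)) :=
  {f | (∀ n, f n ∈ FnSet d F n) ∧
    ∀ n, ∀ p : Delta d (n+1), deltaFst d n (f (n+1) p) = f n (deltaFst d n p)}

/-!
Choose `r i ∈ F` with `r i i = d` (transitivity of `F`). Going out from `b`, this addresses the
sphere of radius `n + 1` about `b` by `Δ_{n+1}`: neighbours of `b` by their labels, and the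
children of a vertex whose edge towards `b` has label `i` by the images under `r i` of their
labels, which lie in `{1, …, d} ∖ {d} = D`. In a tree these addresses are bijective, and an
automorphism fixing `b` preserves the spheres, so the stabilizer is the image of an injective
homomorphism `ofLevels : ∏ₙ Sym(Δ_n) → Sym(V)`. For a compatible family, the local action at a
vertex, conjugated by the relevant `r`'s, fixes `d` and restricts on `D` to the `F_d`-coordinate
of the wreath product; so `ofLevels f ∈ U^{(l)}(F)` exactly when `f` lies in `lim← F(n)`. The
topologies agree since the level-`n` component is determined by `g` on a finite sphere.
-/

namespace SimpleGraph

variable {V W : Type*} {G : SimpleGraph V} {G' : SimpleGraph W}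

theorem Iso.dist_le (e : G ≃g G') (u v : V) : G'.dist (e u) (e v) ≤ G.dist u v := by
  by_cases huv : G.Reachable u v
  · obtain ⟨p, hp⟩ := huv.exists_walk_length_eq_dist
    simpa [hp] using SimpleGraph.dist_le (p.map e.toHom)
  · simp [dist_eq_zero_of_not_reachable (Iso.reachable_iff.not.mpr huv)]

theorem Iso.dist_eq (e : G ≃g G') (u v : V) : G'.dist (e u) (e v) = G.dist u v :=
  (e.dist_le u v).antisymm (by simpa using e.symm.dist_le (e u) (e v))

theorem IsTree.eq_of_adj_of_dist_lt (hG : G.IsTree) {u v v' w : V} (hv : G.Adj v w)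
    (hv' : G.Adj v' w) (h : G.dist u v < G.dist u w) (h' : G.dist u v' < G.dist u w) :
    v = v' := by
  have geodesic : ∀ {x} (hx : G.Adj x w), G.dist u x < G.dist u w →
      ∃ p : G.Walk u x, (p.concat hx).IsPath := by
    intro x hx hlt
    obtain ⟨p, -, hp⟩ := hG.connected.exists_path_of_dist u x
    refine ⟨p, (p.concat hx).isPath_of_length_eq_dist ?_⟩
    have := hG.dist_eq_dist_add_one_of_adj u hx
    rw [Walk.length_concat, hp]
    omega
  obtain ⟨p, hp⟩ := geodesic hv h
  obtain ⟨p', hp'⟩ := geodesic hv' h'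
  have hpp' := congrArg Subtype.val ((hG.isAcyclic.subsingleton_path u w).elim ⟨_, hp⟩ ⟨_, hp'⟩)
  exact (Walk.concat_inj hpp').1

end SimpleGraph

theorem Equiv.Perm.exists_semiconj_of_mapsTo {α β : Type*} [Finite α] {e : α → β}
    (he : Function.Injective e) {g : Equiv.Perm β}
    (hg : Set.MapsTo g (Set.range e) (Set.range e)) :
    ∃ π : Equiv.Perm α, ∀ a, e (π a) = g (e a) := by
  choose f hf using fun a => hg (Set.mem_range_self a)
  have hinj : Function.Injective f := fun a a' h => he (g.injective (by rw [← hf, ← hf, h]))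
  exact ⟨Equiv.ofBijective f (Finite.injective_iff_bijective.mp hinj), hf⟩

theorem Equiv.Perm.exists_eq_prodShear {α β : Type*} (π : Equiv.Perm (α × β))
    (σ : Equiv.Perm α) (h : ∀ p, (π p).1 = σ p.1) :
    ∃ τ : α → Equiv.Perm β, ∀ a c, π (a, c) = (σ a, τ a c) := by
  have hπ : ∀ a c, π (a, c) = (σ a, (π (a, c)).2) := fun a c => Prod.ext (h _) rfl
  have hπ' : ∀ a c, π⁻¹ (σ a, c) = (a, (π⁻¹ (σ a, c)).2) := fun a c =>
    Prod.ext (σ.injective (by rw [← h]; simp)) rfl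
  refine ⟨fun a => ⟨fun c => (π (a, c)).2, fun c => (π⁻¹ (σ a, c)).2, fun c => ?_, fun c => ?_⟩,
    hπ⟩
  · simp [← hπ]
  · change (π (a, (π⁻¹ (σ a, c)).2)).2 = c
    rw [← hπ']; simp

theorem IsLocallyConstant.of_eqOn_finite {X Y ι V : Type*} [TopologicalSpace X]
    [TopologicalSpace V] [DiscreteTopology V] {F : X → ι → V} (hF : Continuous F) {s : Set ι}
    (hs : s.Finite) {φ : X → Y} (hφ : ∀ x x', Set.EqOn (F x) (F x') s → φ x = φ x') :
    IsLocallyConstant φ := by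
  refine (IsLocallyConstant.iff_exists_open φ).mpr fun x => ⟨{x' | Set.EqOn (F x') (F x) s},
    ?_, fun _ _ => rfl, fun x' hx' => hφ x' x hx'⟩
  have : {x' | Set.EqOn (F x') (F x) s} = ⋂ i ∈ s, (fun x' => F x' i) ⁻¹' {F x i} := by
    ext; simp [Set.EqOn]
  rw [this]
  exact hs.isOpen_biInter fun i _ =>
    ((continuous_apply i).comp hF).isOpen_preimage _ (isOpen_discrete _)

instance Delta.finite (d : ℕ) : (n : ℕ) → Finite (Delta d n)
  | 0 => inferInstanceAs (Finite (Fin d))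
  | n + 1 => have := Delta.finite d n; inferInstanceAs (Finite (Delta d n × Fin (d - 1)))

theorem mem_limSet_iff {d : ℕ} {F : Subgroup (Equiv.Perm (Fin d))}
    {f : (n : ℕ) → Equiv.Perm (Delta d n)} :
    f ∈ limSet d F ↔ f 0 ∈ F ∧ ∀ n, ∃ τ : Delta d n → Equiv.Perm (Fin (d - 1)),
      (∀ ω, τ ω ∈ FdStab d F) ∧ ∀ ω j, f (n + 1) (ω, j) = (f n ω, τ ω j) := by
  constructor
  · rintro ⟨hmem, hcompat⟩
    refine ⟨hmem 0, fun n => ?_⟩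
    obtain ⟨σ, -, τ, hτ, hf⟩ := hmem (n + 1)
    exact ⟨τ, hτ, fun ω j =>
      Prod.ext (hcompat n (ω, j)) ((congrArg Prod.snd (hf (ω, j))).trans rfl)⟩
  · rintro ⟨h0, hτ⟩
    choose τ hτF hf using hτ
    refine ⟨fun n => ?_, fun n p => congrArg Prod.fst (hf n p.1 p.2)⟩
    induction n with
    | zero => exact h0
    | succ n ih => exact ⟨f n, ih, τ n, hτF n, fun p => hf n p.1 p.2⟩

/-- The point `d` of `{1, …, d}`, the one outside the image of `D = Fin (d - 1)`. -/
def finTop (d : ℕ) [NeZero d] : Fin d := ⟨d - 1, Nat.sub_one_lt (NeZero.ne d)⟩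

section Rooting

variable {d : ℕ} [NeZero d]

theorem castLE_ne_finTop (j : Fin (d - 1)) : Fin.castLE (Nat.sub_le d 1) j ≠ finTop d :=
  fun h => by
    have : (j : ℕ) = d - 1 := congrArg Fin.val h
    have := j.isLt
    omega

theorem exists_castLE_eq_of_ne_finTop {c : Fin d} (h : c ≠ finTop d) :
    ∃ j, Fin.castLE (Nat.sub_le d 1) j = c :=
  ⟨⟨c, by have := c.isLt; have : (c : ℕ) ≠ d - 1 := fun h' => h (Fin.ext h'); omega⟩, rfl⟩

/-- Here `a` is the local action at a vertex whose edge towards the root has label `i`, and `i'` is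
the label at its image; the witness of `τ ∈ F_d` is `r i' * a * (r i)⁻¹`. -/
theorem mem_FdStab_iff_exists_conj {F : Subgroup (Equiv.Perm (Fin d))}
    {r : Fin d → Equiv.Perm (Fin d)} (hrF : ∀ i, r i ∈ F) (hr : ∀ i, r i i = finTop d)
    (i i' : Fin d) (τ : Equiv.Perm (Fin (d - 1))) :
    (∃ a ∈ F, i' = a i ∧ ∀ j, (r i')⁻¹ (Fin.castLE (Nat.sub_le d 1) (τ j)) =
      a ((r i)⁻¹ (Fin.castLE (Nat.sub_le d 1) j))) ↔ τ ∈ FdStab d F := by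
  constructor
  · rintro ⟨a, haF, -, ha⟩
    refine ⟨r i' * a * (r i)⁻¹, mul_mem (mul_mem (hrF i') haF) (inv_mem (hrF i)), fun j => ?_⟩
    rw [Equiv.Perm.mul_apply, Equiv.Perm.mul_apply, ← ha j]
    simp
  · rintro ⟨a, haF, ha⟩
    have htop : a (finTop d) = finTop d := by
      by_contra hne
      obtain ⟨k, hk⟩ := exists_castLE_eq_of_ne_finTop hne
      have : a (Fin.castLE (Nat.sub_le d 1) (τ⁻¹ k)) = a (finTop d) := by simp [ha, hk]
      exact castLE_ne_finTop _ (a.injective this)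
    refine ⟨(r i')⁻¹ * a * r i, mul_mem (mul_mem (inv_mem (hrF i')) haF) (hrF i), ?_,
      fun j => by simp [ha j]⟩
    rw [Equiv.Perm.mul_apply, Equiv.Perm.mul_apply, hr, htop, Equiv.Perm.eq_inv_iff_eq, hr]

end Rooting

namespace LegalLabelling

variable {V : Type*} {T : SimpleGraph V} {d : ℕ} (l : LegalLabelling T d)

noncomputable def nbr (x : V) (i : Fin d) : V := (l.surj x i).choose

theorem adj_nbr (x : V) (i : Fin d) : T.Adj x (l.nbr x i) := (l.surj x i).choose_spec.1

theorem label_nbr (x : V) (i : Fin d) : l.label x (l.nbr x i) = i := (l.surj x i).choose_spec.2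

theorem nbr_label {x w : V} (h : T.Adj x w) : l.nbr x (l.label x w) = w :=
  l.inj (l.adj_nbr x _) h (l.label_nbr x _)

end LegalLabelling

theorem IsTreeAut.dist_eq {V : Type*} {T : SimpleGraph V} {g : Equiv.Perm V}
    (hg : IsTreeAut T g) (u v : V) :
    T.dist (g u) (g v) = T.dist u v :=
  SimpleGraph.Iso.dist_eq (G := T) ⟨g, hg _ _⟩ u v

namespace UniversalGroup

open SimpleGraph

variable {V : Type*} {T : SimpleGraph V} {d : ℕ}

/-- `arc l b r n ω` is the vertex with address `ω ∈ Δ_{n+1}` together with its neighbour towards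
`b`. If the edge towards `b` has label `i`, the child with index `j ∈ D` is the neighbour with
label `(r i)⁻¹ j`. -/
noncomputable def arc (l : LegalLabelling T d) (b : V) (r : Fin d → Equiv.Perm (Fin d)) :
    (n : ℕ) → Delta d n → V × V
  | 0, i => (l.nbr b i, b)
  | n + 1, p =>
    let x := arc l b r n p.1
    (l.nbr x.1 ((r (l.label x.1 x.2))⁻¹ (Fin.castLE (Nat.sub_le d 1) p.2)), x.1)

section Addressing

variable (l : LegalLabelling T d) (b : V) (r : Fin d → Equiv.Perm (Fin d))

noncomputable def node (n : ℕ) (ω : Delta d n) : V := (arc l b r n ω).1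

noncomputable def par (n : ℕ) (ω : Delta d n) : V := (arc l b r n ω).2

theorem par_zero (ω : Delta d 0) : par l b r 0 ω = b := rfl

theorem par_succ {n : ℕ} (p : Delta d (n + 1)) : par l b r (n + 1) p = node l b r n p.1 := rfl

theorem label_root_node (i : Delta d 0) : l.label b (node l b r 0 i) = i := l.label_nbr b i

theorem label_node_child {n : ℕ} (ω : Delta d n) (j : Fin (d - 1)) :
    l.label (node l b r n ω) (node l b r (n + 1) (ω, j)) =
      (r (l.label (node l b r n ω) (par l b r n ω)))⁻¹ (Fin.castLE (Nat.sub_le d 1) j) :=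
  l.label_nbr _ _

theorem adj_node_par (n : ℕ) (ω : Delta d n) : T.Adj (node l b r n ω) (par l b r n ω) := by
  cases n <;> exact (l.adj_nbr _ _).symm

theorem adj_node_child {n : ℕ} (ω : Delta d n) (j : Fin (d - 1)) :
    T.Adj (node l b r n ω) (node l b r (n + 1) (ω, j)) :=
  l.adj_nbr _ _

theorem forall_adj_root_iff {P : V → Prop} :
    (∀ w, T.Adj b w → P w) ↔ ∀ i, P (node l b r 0 i) :=
  ⟨fun h i => h _ (l.adj_nbr b i), fun h _ hw => l.nbr_label hw ▸ h _⟩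

variable [NeZero d] {r} (hr : ∀ i, r i i = finTop d)
include hr

theorem node_child_ne_par {n : ℕ} (ω : Delta d n) (j : Fin (d - 1)) :
    node l b r (n + 1) (ω, j) ≠ par l b r n ω := by
  intro h
  have := label_node_child l b r ω j
  rw [h, Equiv.Perm.eq_inv_iff_eq, hr] at this
  exact castLE_ne_finTop j this.symm

theorem forall_adj_node_iff {n : ℕ} {ω : Delta d n} {P : V → Prop} :
    (∀ w, T.Adj (node l b r n ω) w → P w) ↔
      P (par l b r n ω) ∧ ∀ j, P (node l b r (n + 1) (ω, j)) := by
  refine ⟨fun h => ⟨h _ (adj_node_par l b r n ω), fun j => h _ (adj_node_child l b r ω j)⟩,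
    fun ⟨hpar, hchild⟩ w hw => ?_⟩
  set i := l.label (node l b r n ω) (par l b r n ω)
  by_cases hwi : l.label (node l b r n ω) w = i
  · rwa [l.inj hw (adj_node_par l b r n ω) hwi]
  · have : r i (l.label (node l b r n ω) w) ≠ finTop d := by
      rwa [← hr i, (r i).injective.ne_iff]
    obtain ⟨j, hj⟩ := exists_castLE_eq_of_ne_finTop this
    have hlabel : l.label (node l b r n ω) w =
        l.label (node l b r n ω) (node l b r (n + 1) (ω, j)) := by
      rw [label_node_child, Equiv.Perm.eq_inv_iff_eq, hj]
    rw [l.inj hw (adj_node_child l b r ω j) hlabel]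
    exact hchild j

variable (hT : T.IsTree)
include hT

theorem dist_node : ∀ (n : ℕ) (ω : Delta d n), T.dist b (node l b r n ω) = n + 1
  | 0, i => dist_eq_one_iff_adj.mpr (adj_node_par l b r 0 i).symm
  | n + 1, (ω, j) => by
    have hpar : T.dist b (par l b r n ω) < n + 1 := by
      cases n with
      | zero => rw [par_zero, dist_self]; omega
      | succ m => rw [par_succ, dist_node m]; omega
    have hx := dist_node n ω
    have hchild := adj_node_child l b r ω j
    rcases hT.dist_eq_dist_add_one_of_adj b hchild with h | h
    · exact absurd (hT.eq_of_adj_of_dist_lt (u := b) hchild.symm (adj_node_par l b r n ω).symm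
        (by omega) (by omega)) (node_child_ne_par l b hr ω j)
    · omega

theorem dist_par (n : ℕ) (ω : Delta d n) : T.dist b (par l b r n ω) = n := by
  cases n with
  | zero => rw [par_zero, dist_self]
  | succ m => rw [par_succ, dist_node l b hr hT]

theorem node_ne_root (n : ℕ) (ω : Delta d n) : node l b r n ω ≠ b := fun h => by
  simpa [h] using dist_node l b hr hT n ω

theorem eq_par_of_adj {n : ℕ} {ω : Delta d n} {y : V} (hy : T.Adj (node l b r n ω) y)
    (hyb : T.dist b y < n + 1) : y = par l b r n ω :=
  hT.eq_of_adj_of_dist_lt hy.symm (adj_node_par l b r n ω).symm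
    (by rwa [dist_node l b hr hT]) (by rw [dist_node l b hr hT, dist_par l b hr hT]; omega)

theorem node_injective : ∀ n, Function.Injective (node l b r n)
  | 0 => fun i i' h =>
    (label_root_node l b r i).symm.trans ((congrArg (l.label b) h).trans (label_root_node l b r i'))
  | n + 1 => by
    rintro ⟨ω, j⟩ ⟨ω', j'⟩ h
    have hadj : T.Adj (node l b r (n + 1) (ω, j)) (node l b r n ω') := by
      rw [h]; exact (adj_node_child l b r ω' j').symm
    obtain rfl : ω = ω' := (node_injective n
      (eq_par_of_adj l b hr hT hadj (by rw [dist_node l b hr hT]; omega))).symm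
    have hlabel := congrArg (l.label (node l b r n ω)) h
    rw [label_node_child, label_node_child, (r _)⁻¹.injective.eq_iff] at hlabel
    rw [Fin.castLE_injective _ hlabel]

theorem eq_root_or_exists_node (v : V) : v = b ∨ ∃ n ω, node l b r n ω = v := by
  let S : Set V := {v | v = b ∨ ∃ n ω, node l b r n ω = v}
  have hS : ∀ u w, T.Adj u w → u ∈ S → w ∈ S := by
    rintro u w huw (rfl | ⟨n, ω, rfl⟩)
    · exact (forall_adj_root_iff l u r).mpr (fun i => Or.inr ⟨0, i, rfl⟩) w huw
    · refine (forall_adj_node_iff l b hr (P := (· ∈ S))).mpr ⟨?_, fun j => Or.inr ⟨n + 1, _, rfl⟩⟩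
        w huw
      cases n with
      | zero => exact Or.inl rfl
      | succ m => exact Or.inr ⟨m, ω.1, rfl⟩
  have hwalk : ∀ u w (p : T.Walk u w), u ∈ S → w ∈ S := by
    intro u w p
    induction p with
    | nil => exact id
    | cons huw _ ih => exact fun hu => ih (hS _ _ huw hu)
  exact hwalk b v (hT.connected b v).some (Or.inl rfl)

theorem exists_node_eq_of_dist {v : V} {n : ℕ} (hv : T.dist b v = n + 1) :
    ∃ ω, node l b r n ω = v := by
  rcases eq_root_or_exists_node l b hr hT v with rfl | ⟨m, ω, rfl⟩
  · simp at hv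
  · obtain rfl : m = n := by rw [dist_node l b hr hT] at hv; omega
    exact ⟨ω, rfl⟩

noncomputable def addrEquiv : (Σ n, Delta d n) ≃ {v // v ≠ b} :=
  Equiv.ofBijective (fun x => ⟨node l b r x.1 x.2, node_ne_root l b hr hT x.1 x.2⟩) <| by
    refine ⟨fun ⟨n, ω⟩ ⟨m, ψ⟩ h => ?_, fun ⟨v, hv⟩ => ?_⟩
    · have h : node l b r n ω = node l b r m ψ := congrArg Subtype.val h
      obtain rfl : n = m := by
        have := dist_node l b hr hT n ω
        rw [h, dist_node l b hr hT] at this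
        omega
      rw [node_injective l b hr hT n h]
    · obtain ⟨n, ω, rfl⟩ := (eq_root_or_exists_node l b hr hT v).resolve_left hv
      exact ⟨⟨n, ω⟩, rfl⟩

open scoped Classical in
/-- The permutation of `V` fixing `b` and acting by `f n` on the addresses in `Δ_{n+1}`. -/
noncomputable def ofLevels : ((n : ℕ) → Equiv.Perm (Delta d n)) →* Equiv.Perm V :=
  Equiv.Perm.ofSubtype.comp
    ((addrEquiv l b hr hT).permCongrHom.toMonoidHom.comp (Equiv.Perm.sigmaCongrRightHom _))

open scoped Classical in
theorem ofLevels_apply_root (f : (n : ℕ) → Equiv.Perm (Delta d n)) :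
    ofLevels l b hr hT f b = b :=
  Equiv.Perm.ofSubtype_apply_of_not_mem _ (not_not.mpr rfl)

open scoped Classical in
theorem ofLevels_apply_node (f : (n : ℕ) → Equiv.Perm (Delta d n)) (n : ℕ) (ω : Delta d n) :
    ofLevels l b hr hT f (node l b r n ω) = node l b r n (f n ω) := by
  have h : (addrEquiv l b hr hT).symm ⟨node l b r n ω, node_ne_root l b hr hT n ω⟩ = ⟨n, ω⟩ :=
    (Equiv.symm_apply_eq _).mpr rfl
  rw [ofLevels, MonoidHom.comp_apply, MonoidHom.comp_apply,
    Equiv.Perm.ofSubtype_apply_of_mem (p := (· ≠ b)) _ (node_ne_root l b hr hT n ω)]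
  simp only [MulEquiv.toMonoidHom_eq_coe, MonoidHom.coe_coe, Equiv.Perm.sigmaCongrRightHom_apply,
    Equiv.permCongrHom_coe, Equiv.permCongr_apply, h, Equiv.sigmaCongrRight_apply]
  rfl

theorem ofLevels_apply_child (f : (n : ℕ) → Equiv.Perm (Delta d n)) {n : ℕ} (ω : Delta d n)
    (j : Fin (d - 1)) :
    ofLevels l b hr hT f (node l b r (n + 1) (ω, j)) = node l b r (n + 1) (f (n + 1) (ω, j)) :=
  ofLevels_apply_node l b hr hT f (n + 1) (ω, j)

open scoped Classical in
theorem ofLevels_injective : Function.Injective (ofLevels l b hr hT) :=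
  fun _ _ h => Equiv.Perm.sigmaCongrRightHom_injective
    ((addrEquiv l b hr hT).permCongrHom.injective (Equiv.Perm.ofSubtype_injective h))


section Compatible

variable {f : (n : ℕ) → Equiv.Perm (Delta d n)}
  (hf : ∀ n (p : Delta d (n + 1)), (f (n + 1) p).1 = f n p.1)
include hf

theorem ofLevels_apply_par (n : ℕ) (ω : Delta d n) :
    ofLevels l b hr hT f (par l b r n ω) = par l b r n (f n ω) := by
  cases n with
  | zero => rw [par_zero, par_zero, ofLevels_apply_root]
  | succ m => rw [par_succ, par_succ, ofLevels_apply_node, hf]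

theorem ofLevels_adj {u w : V} (huw : T.Adj u w) :
    T.Adj (ofLevels l b hr hT f u) (ofLevels l b hr hT f w) := by
  suffices ∀ w, T.Adj u w → T.Adj (ofLevels l b hr hT f u) (ofLevels l b hr hT f w) from
    this w huw
  rcases eq_root_or_exists_node l b hr hT u with rfl | ⟨n, ω, rfl⟩
  · refine (forall_adj_root_iff l u r).mpr fun i => ?_
    rw [ofLevels_apply_root, ofLevels_apply_node]
    exact (adj_node_par l u r 0 _).symm
  · refine (forall_adj_node_iff l b hr).mpr ⟨?_, fun j => ?_⟩
    · rw [ofLevels_apply_node, ofLevels_apply_par l b hr hT hf]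
      exact adj_node_par l b r n _
    · have hchild : f (n + 1) (ω, j) = (f n ω, (f (n + 1) (ω, j)).2) := Prod.ext (hf n (ω, j)) rfl
      rw [ofLevels_apply_node, ofLevels_apply_child, hchild]
      exact adj_node_child l b r _ _

end Compatible

theorem isTreeAut_ofLevels_iff {f : (n : ℕ) → Equiv.Perm (Delta d n)} :
    IsTreeAut T (ofLevels l b hr hT f) ↔ ∀ n (p : Delta d (n + 1)), (f (n + 1) p).1 = f n p.1 := by
  refine ⟨fun hg n p => ?_, fun hf u w => ⟨fun h => ?_, ofLevels_adj l b hr hT hf⟩⟩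
  · have hadj := (hg _ _).mpr (adj_node_par l b r (n + 1) p)
    rw [par_succ, ofLevels_apply_node, ofLevels_apply_node] at hadj
    refine node_injective l b hr hT n (eq_par_of_adj l b hr hT hadj ?_).symm
    rw [dist_node l b hr hT]
    omega
  · have hf' : ∀ n (p : Delta d (n + 1)), ((f⁻¹) (n + 1) p).1 = (f⁻¹) n p.1 := fun n p => by
      rw [Pi.inv_apply, Pi.inv_apply, Equiv.Perm.eq_inv_iff_eq, ← hf]
      simp
    simpa using ofLevels_adj l b hr hT hf' h

end Addressing

/-- `c(g, x) ∈ F` in the notation of the paper: the second clause of `InU`. -/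
def HasLocalActionIn (l : LegalLabelling T d) (F : Subgroup (Equiv.Perm (Fin d)))
    (g : Equiv.Perm V) (x : V) : Prop :=
  ∃ a ∈ F, ∀ w, T.Adj x w → l.label (g x) (g w) = a (l.label x w)

section Stabilizer

variable (l : LegalLabelling T d) (b : V) {F : Subgroup (Equiv.Perm (Fin d))} [NeZero d]
  {r : Fin d → Equiv.Perm (Fin d)} (hr : ∀ i, r i i = finTop d) (hT : T.IsTree)

theorem hasLocalActionIn_root_iff (f : (n : ℕ) → Equiv.Perm (Delta d n)) :
    HasLocalActionIn l F (ofLevels l b hr hT f) b ↔ f 0 ∈ F := by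
  simp only [HasLocalActionIn, forall_adj_root_iff l b r, ofLevels_apply_root,
    ofLevels_apply_node, label_root_node]
  exact ⟨fun ⟨a, ha, h⟩ => by rwa [show f 0 = a from Equiv.ext h], fun h => ⟨_, h, fun _ => rfl⟩⟩

theorem hasLocalActionIn_node_iff (hrF : ∀ i, r i ∈ F) {f : (n : ℕ) → Equiv.Perm (Delta d n)}
    (hf : ∀ n (p : Delta d (n + 1)), (f (n + 1) p).1 = f n p.1) {n : ℕ} {ω : Delta d n}
    {τ : Equiv.Perm (Fin (d - 1))} (hτ : ∀ j, f (n + 1) (ω, j) = (f n ω, τ j)) :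
    HasLocalActionIn l F (ofLevels l b hr hT f) (node l b r n ω) ↔ τ ∈ FdStab d F := by
  rw [← mem_FdStab_iff_exists_conj hrF hr (l.label (node l b r n ω) (par l b r n ω))
    (l.label (node l b r n (f n ω)) (par l b r n (f n ω)))]
  simp only [HasLocalActionIn, forall_adj_node_iff l b hr, ofLevels_apply_node,
    ofLevels_apply_par l b hr hT hf, ofLevels_apply_child, hτ, label_node_child]

theorem ofLevels_mem_Usub_iff (hrF : ∀ i, r i ∈ F) {f : (n : ℕ) → Equiv.Perm (Delta d n)} :
    ofLevels l b hr hT f ∈ Usub T l F ↔ f ∈ limSet d F := by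
  change (IsTreeAut T _ ∧ ∀ x, HasLocalActionIn l F (ofLevels l b hr hT f) x) ↔ _
  rw [isTreeAut_ofLevels_iff, mem_limSet_iff]
  constructor
  · rintro ⟨hf, hloc⟩
    refine ⟨(hasLocalActionIn_root_iff l b hr hT f).mp (hloc b), fun n => ?_⟩
    obtain ⟨τ, hτ⟩ := Equiv.Perm.exists_eq_prodShear (f (n + 1)) (f n) (hf n)
    exact ⟨τ, fun ω => (hasLocalActionIn_node_iff l b hr hT hrF hf (hτ ω)).mp (hloc _), hτ⟩
  · rintro ⟨h0, hτ⟩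
    choose τ hτF hτ using hτ
    have hf : ∀ n (p : Delta d (n + 1)), (f (n + 1) p).1 = f n p.1 :=
      fun n p => congrArg Prod.fst (hτ n p.1 p.2)
    refine ⟨hf, fun x => ?_⟩
    rcases eq_root_or_exists_node l b hr hT x with rfl | ⟨n, ω, rfl⟩
    · exact (hasLocalActionIn_root_iff l x hr hT f).mpr h0
    · exact (hasLocalActionIn_node_iff l b hr hT hrF hf (hτ n ω)).mpr (hτF n ω)

theorem Ustab_le_range : Ustab T l F b ≤ (ofLevels l b hr hT).range := by
  intro g hg
  obtain ⟨⟨hgT : IsTreeAut T g, -⟩, hgb⟩ := Subgroup.mem_inf.mp hg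
  have hgb : g b = b := hgb
  have hmaps : ∀ n, Set.MapsTo g (Set.range (node l b r n)) (Set.range (node l b r n)) := by
    rintro n _ ⟨ω, rfl⟩
    refine exists_node_eq_of_dist l b hr hT ?_
    have := hgT.dist_eq b (node l b r n ω)
    rwa [hgb, dist_node l b hr hT] at this
  choose f hf using fun n => Equiv.Perm.exists_semiconj_of_mapsTo
    (node_injective l b hr hT n) (hmaps n)
  refine ⟨f, Equiv.ext fun v => ?_⟩
  rcases eq_root_or_exists_node l b hr hT v with rfl | ⟨n, ω, rfl⟩
  · rw [ofLevels_apply_root, hgb]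
  · rw [ofLevels_apply_node, hf]

noncomputable def stabToLevels : Ustab T l F b →* ((n : ℕ) → Equiv.Perm (Delta d n)) :=
  (MonoidHom.ofInjective (ofLevels_injective l b hr hT)).symm.toMonoidHom.comp
    (Subgroup.inclusion (Ustab_le_range l b hr hT))

theorem ofLevels_stabToLevels (g : Ustab T l F b) :
    ofLevels l b hr hT (stabToLevels l b hr hT g) = g :=
  MonoidHom.apply_ofInjective_symm (ofLevels_injective l b hr hT) _

theorem stabToLevels_injective : Function.Injective (stabToLevels l b hr hT (F := F)) :=
  fun g g' h => Subtype.ext <| by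
    rw [← ofLevels_stabToLevels l b hr hT g, h, ofLevels_stabToLevels]

theorem range_stabToLevels (hrF : ∀ i, r i ∈ F) :
    Set.range (stabToLevels l b hr hT (F := F)) = limSet d F := by
  ext f
  constructor
  · rintro ⟨g, rfl⟩
    rw [← ofLevels_mem_Usub_iff l b hr hT hrF, ofLevels_stabToLevels]
    exact (Subgroup.mem_inf.mp g.2).1
  · intro hf
    refine ⟨⟨ofLevels l b hr hT f, Subgroup.mem_inf.mpr
      ⟨(ofLevels_mem_Usub_iff l b hr hT hrF).mpr hf, ofLevels_apply_root l b hr hT f⟩⟩, ?_⟩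
    exact ofLevels_injective l b hr hT (ofLevels_stabToLevels l b hr hT _)

open Topology in
theorem isEmbedding_stabToLevels :
    @IsEmbedding _ _ (.induced Subtype.val (permTop V))
      (@Pi.topologicalSpace ℕ (fun n => Equiv.Perm (Delta d n)) fun _ => ⊥)
      (stabToLevels l b hr hT (F := F)) := by
  let _ : TopologicalSpace V := ⊥
  have : DiscreteTopology V := ⟨rfl⟩
  let _ (n : ℕ) : TopologicalSpace (Equiv.Perm (Delta d n)) := ⊥
  have (n : ℕ) : DiscreteTopology (Equiv.Perm (Delta d n)) := ⟨rfl⟩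
  let _ : TopologicalSpace (Equiv.Perm V) := permTop V
  have hcoe : IsEmbedding fun g : Ustab T l F b => ((g : Equiv.Perm V) : V → V) :=
    (IsEmbedding.induced DFunLike.coe_injective).comp IsEmbedding.subtypeVal
  have hstab : Continuous (stabToLevels l b hr hT (F := F)) := by
    refine continuous_pi fun n => (IsLocallyConstant.of_eqOn_finite hcoe.continuous
      (Set.finite_range (node l b r n)) fun g g' h => Equiv.ext fun ω => ?_).continuous
    refine node_injective l b hr hT n ?_
    rw [← ofLevels_apply_node l b hr hT, ← ofLevels_apply_node l b hr hT,
      ofLevels_stabToLevels, ofLevels_stabToLevels]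
    exact h ⟨ω, rfl⟩
  have hlev : Continuous fun f => (ofLevels l b hr hT f : V → V) := by
    refine continuous_pi fun v => ?_
    rcases eq_root_or_exists_node l b hr hT v with rfl | ⟨n, ω, rfl⟩
    · simpa only [ofLevels_apply_root] using continuous_const
    · simp only [ofLevels_apply_node]
      exact Continuous.comp (g := fun π : Equiv.Perm (Delta d n) => node l b r n (π ω))
        continuous_of_discreteTopology (continuous_apply n)
  have hcomp : (fun f => (ofLevels l b hr hT f : V → V)) ∘ stabToLevels l b hr hT =
      fun g : Ustab T l F b => ((g : Equiv.Perm V) : V → V) :=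
    funext fun g => congrArg DFunLike.coe (ofLevels_stabToLevels l b hr hT g)
  exact IsEmbedding.of_comp hstab hlev (hcomp ▸ hcoe)

end Stabilizer

end UniversalGroup

/-- The stabilizer of a vertex in U^{(l)}(F), F transitive, is isomorphic as a
topological group to the profinite group lim← F(n): there is an injective group
homomorphism φ from the stabilizer to the product ∏ₙ Sym(Δ_n) whose image is exactly the
inverse limit and which is a topological embedding (each Sym(Δ_n) being discrete). -/
theorem universal_group_stabilizer_profinite {V : Type*} (T : SimpleGraph V)
    (hT : T.IsTree) (d : ℕ) (hd : 3 ≤ d) (l : LegalLabelling T d)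
    (F : Subgroup (Equiv.Perm (Fin d))) (hFt : ∀ i j : Fin d, ∃ a ∈ F, a i = j)
    (b : V) :
    ∃ φ : ↥(Ustab T l F b) →* ((n : ℕ) → Equiv.Perm (Delta d n)),
      Function.Injective φ ∧
      Set.range φ = limSet d F ∧
      @Topology.IsEmbedding _ _
        (TopologicalSpace.induced Subtype.val (permTop V))
        (@Pi.topologicalSpace ℕ (fun n => Equiv.Perm (Delta d n)) (fun _ => ⊥))
        φ := by
  have : NeZero d := ⟨by omega⟩
  choose r hrF hr using fun i => hFt i (finTop d)
  exact ⟨UniversalGroup.stabToLevels l b hr hT, UniversalGroup.stabToLevels_injective l b hr hT,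
    UniversalGroup.range_stabToLevels l b hr hT hrF,
    UniversalGroup.isEmbedding_stabToLevels l b hr hT⟩
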